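/- arXiv:2601.07155 — 2 statements merged into one kernel-verified Lean document; each statement's English description precedes it below -/
import Mathlib

section
/- Let P_T be a probability distribution on a finite set Y with P_T(y) > 0 for all y, and let 0 ≤ β < 1. If a probability distribution P satisfies P(y) = P_T(y)·P(y)^β / Z for all y (where Z = Σ_{y'} P_T(y')·P(y')^β), then P(y) = P_T(y)^{1/(1-β)} / Σ_{y'} P_T(y')^{1/(1-β)} for all y. -/
/-!
Dividing the fixed-point equation `P y = P_T y · P y ^ β / Z` by `P y ^ β` gives
`P y ^ (1 - β) = P_T y / Z`, so `P y = (P_T y / Z) ^ (1 / (1 - β))` is proportional to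
`P_T y ^ (1 / (1 - β))`; since `P` sums to one, the constant of proportionality is the
normalizing sum.
-/

open Finset

lemma Real.rpow_one_sub_eq_div_of_eq_mul_rpow_div {p t z β : ℝ} (hp : 0 < p) (hz : z ≠ 0)
    (h : p = t * p ^ β / z) : p ^ (1 - β) = t / z := by
  have hpβ : p ^ β ≠ 0 := (Real.rpow_pos_of_pos hp β).ne'
  rw [Real.rpow_sub hp, Real.rpow_one, div_eq_div_iff hpβ hz]
  exact (eq_div_iff hz).mp h

lemma eq_div_sum_of_eq_div_of_sum_eq_one {ι : Type*} [Fintype ι] {P f : ι → ℝ} {c : ℝ}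
    (hP : ∀ i, P i = f i / c) (hsum : ∑ i, P i = 1) : ∀ i, P i = f i / ∑ j, f j := by
  have hfc : (∑ j, f j) / c = 1 := by
    rw [sum_div, ← hsum]
    exact sum_congr rfl fun i _ => (hP i).symm
  have hc : c ≠ 0 := by rintro rfl; simp at hfc
  intro i
  rw [hP i, (div_eq_one_iff_eq hc).mp hfc]

theorem veto_fixed_point_general {Y : Type*} [Fintype Y]
    (PT P : Y → ℝ) (hPT : ∀ y, 0 < PT y)
    (hP : ∀ y, 0 < P y) (hPsum : ∑ y, P y = 1)
    (β : ℝ) (hβ1 : β < 1)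
    (hfix : ∀ y, P y = PT y * P y ^ β / ∑ y', PT y' * P y' ^ β) :
    ∀ y, P y = PT y ^ (1 / (1 - β)) / ∑ y', PT y' ^ (1 / (1 - β)) := by
  set Z := ∑ y', PT y' * P y' ^ β
  have hZ_nonneg : 0 ≤ Z :=
    sum_nonneg fun y _ => mul_nonneg (hPT y).le (Real.rpow_nonneg (hP y).le β)
  have hZ : Z ≠ 0 := by
    intro hZ0
    have : ∑ y, P y = 0 := sum_eq_zero fun y _ => by rw [hfix y, hZ0, div_zero]
    linarith
  have hγ : 1 - β ≠ 0 := by linarith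
  refine eq_div_sum_of_eq_div_of_sum_eq_one (c := Z ^ (1 / (1 - β))) (fun y => ?_) hPsum
  calc P y = (P y ^ (1 - β)) ^ (1 / (1 - β)) := by rw [one_div, Real.rpow_rpow_inv (hP y).le hγ]
    _ = (PT y / Z) ^ (1 / (1 - β)) := by
      rw [Real.rpow_one_sub_eq_div_of_eq_mul_rpow_div (hP y) hZ (hfix y)]
    _ = PT y ^ (1 / (1 - β)) / Z ^ (1 / (1 - β)) := Real.div_rpow (hPT y).le hZ_nonneg _

/-- Fixed-point (sharpening) theorem: if a positive probability distribution `P` on a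
finite set satisfies `P(y) = P_T(y)·P(y)^β / Z` with `Z = Σ_{y'} P_T(y')·P(y')^β`, then
`P(y) = P_T(y)^{1/(1-β)} / Σ_{y'} P_T(y')^{1/(1-β)}`. -/
theorem veto_fixed_point {Y : Type*} [Fintype Y] [Nonempty Y]
    (PT P : Y → ℝ) (hPT : ∀ y, 0 < PT y) (hPTsum : ∑ y, PT y = 1)
    (hP : ∀ y, 0 < P y) (hPsum : ∑ y, P y = 1)
    (β : ℝ) (hβ0 : 0 ≤ β) (hβ1 : β < 1)
    (hfix : ∀ y, P y = PT y * P y ^ β / ∑ y', PT y' * P y' ^ β) :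
    ∀ y, P y = PT y ^ (1 / (1 - β)) / ∑ y', PT y' ^ (1 / (1 - β)) :=
  veto_fixed_point_general PT P hPT hP hPsum β hβ1 hfix
end

section
/- For a probability distribution P_T on a finite set with at least two elements attaining distinct probabilities, and for 0 < β < 1, the Shannon entropy of the sharpened distribution P*(y) ∝ P_T(y)^{1/(1-β)} is strictly less than the entropy of P_T. -/
open Finset

private lemma gibbs_le {Y : Type*} [Fintype Y] (p q : Y → ℝ)
    (hp : ∀ y, 0 < p y) (hq : ∀ y, 0 < q y)
    (hs : ∑ y, q y ≤ ∑ y, p y) :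
    ∑ y, p y * (Real.log (q y) - Real.log (p y)) ≤ 0 := by
  have h : ∑ y, p y * (Real.log (q y) - Real.log (p y)) ≤ ∑ y, (q y - p y) := by
    apply Finset.sum_le_sum
    intro y _
    have hpos : 0 < q y / p y := div_pos (hq y) (hp y)
    have hlog : Real.log (q y) - Real.log (p y) ≤ q y / p y - 1 := by
      rw [← Real.log_div (ne_of_gt (hq y)) (ne_of_gt (hp y))]
      exact Real.log_le_sub_one_of_pos hpos
    calc p y * (Real.log (q y) - Real.log (p y)) ≤ p y * (q y / p y - 1) := by
          exact mul_le_mul_of_nonneg_left hlog (le_of_lt (hp y))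
      _ = q y - p y := by
          rw [mul_comm (p y), sub_mul, div_mul_cancel₀ _ (ne_of_gt (hp y)), one_mul]
  have : ∑ y, (q y - p y) ≤ 0 := by
    rw [Finset.sum_sub_distrib]; linarith
  linarith

private lemma gibbs_lt {Y : Type*} [Fintype Y] (p q : Y → ℝ)
    (hp : ∀ y, 0 < p y) (hq : ∀ y, 0 < q y)
    (hs : ∑ y, q y ≤ ∑ y, p y)
    (hne : ∃ y, p y ≠ q y) :
    ∑ y, p y * (Real.log (q y) - Real.log (p y)) < 0 := by
  have h : ∑ y, p y * (Real.log (q y) - Real.log (p y)) < ∑ y, (q y - p y) := by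
    obtain ⟨y₀, hy₀⟩ := hne
    apply Finset.sum_lt_sum
    · intro y _
      have hpos : 0 < q y / p y := div_pos (hq y) (hp y)
      have hlog : Real.log (q y) - Real.log (p y) ≤ q y / p y - 1 := by
        rw [← Real.log_div (ne_of_gt (hq y)) (ne_of_gt (hp y))]
        exact Real.log_le_sub_one_of_pos hpos
      calc p y * (Real.log (q y) - Real.log (p y)) ≤ p y * (q y / p y - 1) := by
            exact mul_le_mul_of_nonneg_left hlog (le_of_lt (hp y))
        _ = q y - p y := by
          rw [mul_comm (p y), sub_mul, div_mul_cancel₀ _ (ne_of_gt (hp y)), one_mul]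
    · refine ⟨y₀, Finset.mem_univ _, ?_⟩
      have hpos : 0 < q y₀ / p y₀ := div_pos (hq y₀) (hp y₀)
      have hne1 : q y₀ / p y₀ ≠ 1 := by
        intro h1
        exact hy₀ ((div_eq_one_iff_eq (ne_of_gt (hp y₀))).mp h1).symm
      have hlog : Real.log (q y₀) - Real.log (p y₀) < q y₀ / p y₀ - 1 := by
        rw [← Real.log_div (ne_of_gt (hq y₀)) (ne_of_gt (hp y₀))]
        have hlogne : Real.log (q y₀ / p y₀) ≠ 0 := by
          intro h0
          apply hne1
          rw [← Real.exp_log hpos, h0, Real.exp_zero]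
        have := Real.add_one_lt_exp hlogne
        rw [Real.exp_log hpos] at this
        linarith
      calc p y₀ * (Real.log (q y₀) - Real.log (p y₀))
            < p y₀ * (q y₀ / p y₀ - 1) := by
            exact mul_lt_mul_of_pos_left hlog (hp y₀)
        _ = q y₀ - p y₀ := by
            rw [mul_comm (p y₀), sub_mul, div_mul_cancel₀ _ (ne_of_gt (hp y₀)), one_mul]
  have : ∑ y, (q y - p y) ≤ 0 := by
    rw [Finset.sum_sub_distrib]; linarith
  linarith

/-- Sharpening strictly decreases entropy: if `P_T` takes at least two distinct values
and `0 < β < 1`, then the Shannon entropy of `P*(y) ∝ P_T(y)^{1/(1-β)}` is strictly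
less than that of `P_T`. -/
theorem sharpened_entropy_strictly_smaller {Y : Type*} [Fintype Y] [Nonempty Y]
    (PT : Y → ℝ) (hPT : ∀ y, 0 < PT y) (hPTsum : ∑ y, PT y = 1)
    (hne : ∃ y₁ y₂ : Y, PT y₁ ≠ PT y₂)
    (β : ℝ) (hβ0 : 0 < β) (hβ1 : β < 1) :
    -∑ y, (PT y ^ (1 / (1 - β)) / ∑ y', PT y' ^ (1 / (1 - β))) *
        Real.log (PT y ^ (1 / (1 - β)) / ∑ y', PT y' ^ (1 / (1 - β))) <
      -∑ y, PT y * Real.log (PT y) := by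
  set γ : ℝ := 1 / (1 - β) with hγdef
  have hγ1 : 1 < γ := by
    rw [hγdef]
    rw [lt_div_iff₀ (by linarith)]
    linarith
  set Z : ℝ := ∑ y', PT y' ^ γ with hZdef
  have hZpos : 0 < Z := Finset.sum_pos (fun y _ => Real.rpow_pos_of_pos (hPT y) γ)
    Finset.univ_nonempty
  set q : Y → ℝ := fun y => PT y ^ γ / Z with hqdef
  have hqpos : ∀ y, 0 < q y := fun y => div_pos (Real.rpow_pos_of_pos (hPT y) γ) hZpos
  have hqsum : ∑ y, q y = 1 := by
    rw [hqdef, ← Finset.sum_div, ← hZdef, div_self (ne_of_gt hZpos)]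
  -- log q y = γ * log (PT y) - log Z
  have hlogq : ∀ y, Real.log (q y) = γ * Real.log (PT y) - Real.log Z := by
    intro y
    rw [hqdef]
    rw [Real.log_div (ne_of_gt (Real.rpow_pos_of_pos (hPT y) γ)) (ne_of_gt hZpos),
      Real.log_rpow (hPT y)]
  set S : ℝ := ∑ y, PT y * Real.log (PT y) with hSdef
  set T : ℝ := ∑ y, q y * Real.log (PT y) with hTdef
  -- p ≠ q pointwise somewhere
  have hpq : ∃ y, PT y ≠ q y := by
    by_contra h
    push_neg at h
    obtain ⟨y₁, y₂, h12⟩ := hne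
    have key : ∀ y, (γ - 1) * Real.log (PT y) = Real.log Z := by
      intro y
      have := congrArg Real.log (h y)
      rw [hlogq y] at this
      linarith
    have : Real.log (PT y₁) = Real.log (PT y₂) := by
      have h1 := key y₁; have h2 := key y₂
      have : (γ - 1) * Real.log (PT y₁) = (γ - 1) * Real.log (PT y₂) := by linarith
      exact mul_left_cancel₀ (by linarith : (γ:ℝ) - 1 ≠ 0) this
    exact h12 (Real.log_injOn_pos.eq_iff (Set.mem_Ioi.mpr (hPT y₁))
      (Set.mem_Ioi.mpr (hPT y₂)) |>.mp this)
  -- Strict Gibbs: ∑ p (log q - log p) < 0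
  have g1 : ∑ y, PT y * (Real.log (q y) - Real.log (PT y)) < 0 :=
    gibbs_lt PT q hPT hqpos (by rw [hqsum, hPTsum]) hpq
  -- Non-strict Gibbs: ∑ q (log p - log q) ≤ 0
  have g2 : ∑ y, q y * (Real.log (PT y) - Real.log (q y)) ≤ 0 :=
    gibbs_le q PT hqpos hPT (by rw [hqsum, hPTsum])
  -- rewrite g1 : (γ - 1) * S - log Z < 0
  have e1 : ∑ y, PT y * (Real.log (q y) - Real.log (PT y))
      = (γ - 1) * S - Real.log Z := by
    calc ∑ y, PT y * (Real.log (q y) - Real.log (PT y))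
        = ∑ y, ((γ - 1) * (PT y * Real.log (PT y)) - PT y * Real.log Z) := by
          apply Finset.sum_congr rfl
          intro y _
          rw [hlogq y]; ring
      _ = _ := by
          rw [Finset.sum_sub_distrib, ← Finset.mul_sum, ← Finset.sum_mul, hPTsum,
            one_mul, ← hSdef]
  -- rewrite g2 : (1 - γ) * T + log Z ≤ 0
  have e2 : ∑ y, q y * (Real.log (PT y) - Real.log (q y))
      = (1 - γ) * T + Real.log Z := by
    calc ∑ y, q y * (Real.log (PT y) - Real.log (q y))
        = ∑ y, ((1 - γ) * (q y * Real.log (PT y)) + q y * Real.log Z) := by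
          apply Finset.sum_congr rfl
          intro y _
          rw [hlogq y]; ring
      _ = _ := by
          rw [Finset.sum_add_distrib, ← Finset.mul_sum, ← Finset.sum_mul, hqsum,
            one_mul, ← hTdef]
  rw [e1] at g1
  rw [e2] at g2
  -- entropy of q: -∑ q log q = -(γ T - log Z)
  have eq2 : ∑ y, q y * Real.log (q y) = γ * T - Real.log Z := by
    calc ∑ y, q y * Real.log (q y)
        = ∑ y, (γ * (q y * Real.log (PT y)) - q y * Real.log Z) := by
          apply Finset.sum_congr rfl
          intro y _
          rw [hlogq y]; ring
      _ = _ := by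
          rw [Finset.sum_sub_distrib, ← Finset.mul_sum, ← Finset.sum_mul, hqsum,
            one_mul, ← hTdef]
  rw [eq2]
  -- goal: -(γ T - log Z) < -S; from g1: (γ-1)S < log Z; g2: log Z ≤ (γ-1)T ⇒ S < T
  have hST : S < T := by
    have h1 : (γ - 1) * S < (γ - 1) * T := by linarith
    exact lt_of_mul_lt_mul_left h1 (by linarith)
  nlinarith [hST, g1, g2, hγ1]
end
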